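/- The family {Γ(X)}_{X∈L} is a partition of E: (i) for all X, X' ∈ L with X ≠ X', Γ(X) ∩ Γ(X') = ∅; (ii) for every Y ∈ E, Y ∈ Γ(C(Y)); consequently (iii) ⋃_{X∈L} Γ(X) = E. -/
import Mathlib


open scoped BigOperators

namespace OB

/-- The space of order configurations `E = ℕ^d × ℕ^d`: buy side and sell side. -/
abbrev E (d : ℕ) := (Fin d → ℕ) × (Fin d → ℕ)

/-- Price support of a vector: the set of prices `j ∈ {1,…,d}` with a positive queue. -/
def supp {d : ℕ} (Z : Fin d → ℕ) : Finset ℕ :=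
  (Finset.univ.filter fun j : Fin d => 0 < Z j).image fun j : Fin d => (j : ℕ) + 1

/-- `sup supp`, with the convention `sup ∅ = 0`. -/
def supSupp {d : ℕ} (Z : Fin d → ℕ) : ℕ := (supp Z).sup id

/-- `inf supp`, with the convention `inf ∅ = d+1`. -/
def infSupp {d : ℕ} (Z : Fin d → ℕ) : ℕ :=
  if h : (supp Z).Nonempty then (supp Z).min' h else d + 1

/-- bid price `b(X) = sup supp(X⁺)`. -/
def bid {d : ℕ} (X : E d) : ℕ := supSupp X.1

/-- ask price `a(X) = inf supp(X⁻)`. -/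
def ask {d : ℕ} (X : E d) : ℕ := infSupp X.2

/-- Admissible limit order book configurations: `a(X) > b(X)`. -/
def Lset (d : ℕ) : Set (E d) := {X | bid X < ask X}

/-- Entry of a vector at price `i` (prices run from 1 to d; 0 outside this range). -/
def ent {d : ℕ} (z : Fin d → ℕ) (i : ℕ) : ℕ :=
  if h : 1 ≤ i ∧ i ≤ d then z ⟨i - 1, by omega⟩ else 0

/-- Standard basis vector at price `i`. -/
def e {d : ℕ} (i : ℕ) : Fin d → ℕ := fun j => if (j : ℕ) + 1 = i then 1 else 0

/-- `τ_i`: zero out all entries at prices `> i`. -/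
def tauLow {d : ℕ} (i : ℤ) (z : Fin d → ℕ) : Fin d → ℕ :=
  fun j => if ((j : ℕ) + 1 : ℤ) ≤ i then z j else 0

/-- `τ^i`: zero out all entries at prices `< i`. -/
def tauHigh {d : ℕ} (i : ℤ) (z : Fin d → ℕ) : Fin d → ℕ :=
  fun j => if i ≤ ((j : ℕ) + 1 : ℤ) then z j else 0

/-- `B_X(k) = Σ_{i ≥ k} X⁺_i`. -/
def BX {d : ℕ} (X : E d) (k : ℕ) : ℕ := ∑ j : Fin d, if k ≤ (j : ℕ) + 1 then X.1 j else 0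

/-- `S_X(k) = Σ_{i ≤ k} X⁻_i`. -/
def SX {d : ℕ} (X : E d) (k : ℕ) : ℕ := ∑ j : Fin d, if (j : ℕ) + 1 ≤ k then X.2 j else 0

/-- `g_X(k) = S_X(k) − B_X(k)`. -/
def gX {d : ℕ} (X : E d) (k : ℕ) : ℤ := (SX X k : ℤ) - (BX X k : ℤ)

/-- `p_A(X) = inf{k ∈ {1,…,d} : g_X(k) > 0}`, convention `inf ∅ = d+1`. -/
def pA {d : ℕ} (X : E d) : ℕ :=
  if h : ((Finset.Icc 1 d).filter fun k => 0 < gX X k).Nonempty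
  then ((Finset.Icc 1 d).filter fun k => 0 < gX X k).min' h else d + 1

/-- `p_B(X) = sup{k ∈ {1,…,d} : g_X(k) < 0}`, convention `sup ∅ = 0`. -/
def pB {d : ℕ} (X : E d) : ℕ :=
  ((Finset.Icc 1 d).filter fun k => gX X k < 0).sup id

/-- `B_X⁻¹(z) = sup{i ∈ {1,…,d} : B_X(i) ≥ z}`, convention `sup ∅ = 0`. -/
def Binv {d : ℕ} (X : E d) (z : ℕ) : ℕ :=
  ((Finset.Icc 1 d).filter fun i => z ≤ BX X i).sup id

/-- `S_X⁻¹(z) = inf{i ∈ {1,…,d} : S_X(i) ≥ z}`, convention `inf ∅ = d+1`. -/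
def Sinv {d : ℕ} (X : E d) (z : ℕ) : ℕ :=
  if h : ((Finset.Icc 1 d).filter fun i => z ≤ SX X i).Nonempty
  then ((Finset.Icc 1 d).filter fun i => z ≤ SX X i).min' h else d + 1

/-- Buy side after order-matching clearing (Eq. (11) of the paper):
`C(X)⁺ = τ_{p_B}(X⁺)` if `g_X(p_B) ≤ −X⁺_{p_B}`, and
`C(X)⁺ = τ_{p_B−1}(X⁺) − min{0, g_X(p_B)}·e_{p_B}` otherwise. -/
def clearPlus {d : ℕ} (X : E d) : Fin d → ℕ :=
  if gX X (pB X) ≤ -(ent X.1 (pB X) : ℤ) then tauLow (pB X : ℤ) X.1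
  else fun j => tauLow ((pB X : ℤ) - 1) X.1 j + (max 0 (-(gX X (pB X)))).toNat * e (pB X) j

/-- Sell side after order-matching clearing (Eq. (12) of the paper):
`C(X)⁻ = τ^{p_A}(X⁻)` if `g_X(p_A) ≥ X⁻_{p_A}`, and
`C(X)⁻ = τ^{p_A+1}(X⁻) + max{0, g_X(p_A)}·e_{p_A}` otherwise. -/
def clearMinus {d : ℕ} (X : E d) : Fin d → ℕ :=
  if (ent X.2 (pA X) : ℤ) ≤ gX X (pA X) then tauHigh (pA X : ℤ) X.2
  else fun j => tauHigh ((pA X : ℤ) + 1) X.2 j + (max 0 (gX X (pA X))).toNat * e (pA X) j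

/-- The order-matching clearing operator. -/
def clear {d : ℕ} (X : E d) : E d := (clearPlus X, clearMinus X)

/-- Price support of an integer-valued vector. -/
def suppZ {d : ℕ} (W : Fin d → ℤ) : Finset ℕ :=
  (Finset.univ.filter fun j : Fin d => 0 < W j).image fun j : Fin d => (j : ℕ) + 1

/-- `sup supp` of an integer-valued vector, convention `sup ∅ = 0`. -/
def supSuppZ {d : ℕ} (W : Fin d → ℤ) : ℕ := (suppZ W).sup id

/-- `inf supp` of an integer-valued vector, convention `inf ∅ = d+1`. -/
def infSuppZ {d : ℕ} (W : Fin d → ℤ) : ℕ :=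
  if h : (suppZ W).Nonempty then (suppZ W).min' h else d + 1

/-- `D : E → E` is an order-matching clearing operator: it maps into `L`, its fixed
points are exactly `L`, and, with `Z(X) = X − D(X)` (computed in `ℤ^d × ℤ^d`), the
conditions (A1)–(A4) of Definition 2.2 hold. -/
def IsOrderMatchingClearing {d : ℕ} (D : E d → E d) : Prop :=
  (∀ X : E d, D X ∈ Lset d) ∧
  (∀ X : E d, X ∈ Lset d ↔ D X = X) ∧
  (∀ X : E d,
    -- (A1): the executed orders `Z(X) = X − D(X)` have nonnegative entries
    (∀ j, (D X).1 j ≤ X.1 j ∧ (D X).2 j ≤ X.2 j) ∧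
    -- (A2): `|Z(X)⁺| = |Z(X)⁻|`
    (∑ j, ((X.1 j : ℤ) - ((D X).1 j : ℤ))) = (∑ j, ((X.2 j : ℤ) - ((D X).2 j : ℤ))) ∧
    -- (A3): `sup supp(Z(X)⁻) ≤ inf supp(Z(X)⁺)`
    supSuppZ (fun j => (X.2 j : ℤ) - ((D X).2 j : ℤ)) ≤
      infSuppZ (fun j => (X.1 j : ℤ) - ((D X).1 j : ℤ)) ∧
    -- (A4): `sup supp(Z(X)⁻) ≤ inf supp(D(X)⁻)` and `inf supp(Z(X)⁺) ≥ sup supp(D(X)⁺)`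
    supSuppZ (fun j => (X.2 j : ℤ) - ((D X).2 j : ℤ)) ≤ infSupp (D X).2 ∧
    supSupp (D X).1 ≤ infSuppZ (fun j => (X.1 j : ℤ) - ((D X).1 j : ℤ)))


/-- The set `Γ(X)` of Proposition 2.7: configurations obtained from `X ∈ L` by adding
a pair of order distributions `Z` with `|Z⁺| = |Z⁻|`, `sup supp(Z⁻) ≤ inf supp(Z⁺)`,
`sup supp(Z⁻) ≤ a(X)` and `inf supp(Z⁺) ≥ b(X)`. -/
def Gamma {d : ℕ} (X : E d) : Set (E d) :=
  {Y | ∃ Z : E d, Y = X + Z ∧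
    (∑ j, Z.1 j) = (∑ j, Z.2 j) ∧
    supSupp Z.2 ≤ infSupp Z.1 ∧
    supSupp Z.2 ≤ ask X ∧
    bid X ≤ infSupp Z.1}

section Helpers

variable {d : ℕ}

lemma ent_apply (z : Fin d → ℕ) (j : Fin d) : ent z ((j : ℕ) + 1) = z j := by
  have h : 1 ≤ (j : ℕ) + 1 ∧ (j : ℕ) + 1 ≤ d := ⟨Nat.le_add_left _ _, j.2⟩
  simp only [ent, dif_pos h]
  congr 1

lemma ent_zero (z : Fin d → ℕ) : ent z 0 = 0 := by simp [ent]

lemma ent_of_gt (z : Fin d → ℕ) {i : ℕ} (h : d < i) : ent z i = 0 := by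
  simp only [ent]; rw [dif_neg]; omega

lemma mem_supp_iff {z : Fin d → ℕ} {k : ℕ} :
    k ∈ supp z ↔ ∃ j : Fin d, 0 < z j ∧ (j : ℕ) + 1 = k := by
  simp [supp, Finset.mem_image, Finset.mem_filter]

lemma supSupp_le_iff {z : Fin d → ℕ} {n : ℕ} :
    supSupp z ≤ n ↔ ∀ j : Fin d, 0 < z j → (j : ℕ) + 1 ≤ n := by
  constructor
  · intro h j hj
    exact le_trans (Finset.le_sup (f := id) (mem_supp_iff.2 ⟨j, hj, rfl⟩)) h
  · intro h
    apply Finset.sup_le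
    intro k hk
    obtain ⟨j, hj, rfl⟩ := mem_supp_iff.1 hk
    exact h j hj

lemma le_supSupp {z : Fin d → ℕ} {j : Fin d} (h : 0 < z j) : (j : ℕ) + 1 ≤ supSupp z :=
  Finset.le_sup (f := id) (mem_supp_iff.2 ⟨j, h, rfl⟩)

lemma supSupp_le_d (z : Fin d → ℕ) : supSupp z ≤ d :=
  supSupp_le_iff.2 fun j _ => j.2

lemma infSupp_le {z : Fin d → ℕ} {j : Fin d} (h : 0 < z j) : infSupp z ≤ (j : ℕ) + 1 := by
  have hm : (j : ℕ) + 1 ∈ supp z := mem_supp_iff.2 ⟨j, h, rfl⟩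
  rw [infSupp, dif_pos ⟨_, hm⟩]
  exact Finset.min'_le _ _ hm

lemma le_infSupp {z : Fin d → ℕ} {n : ℕ} (hn : n ≤ d + 1)
    (h : ∀ j : Fin d, 0 < z j → n ≤ (j : ℕ) + 1) : n ≤ infSupp z := by
  rw [infSupp]
  split
  · rename_i hne
    obtain ⟨k, hk⟩ := hne
    have := Finset.min'_mem (supp z) ⟨k, hk⟩
    obtain ⟨j, hj, hjk⟩ := mem_supp_iff.1 this
    rw [← hjk]
    exact h j hj
  · exact hn

lemma infSupp_le_d1 (z : Fin d → ℕ) : infSupp z ≤ d + 1 := by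
  rw [infSupp]
  split
  · rename_i hne
    have := Finset.min'_mem (supp z) hne
    obtain ⟨j, _, hjk⟩ := mem_supp_iff.1 this
    omega
  · exact le_refl _

lemma ent_supSupp_pos {z : Fin d → ℕ} (h : 1 ≤ supSupp z) : 0 < ent z (supSupp z) := by
  have hne : (supp z).Nonempty := by
    by_contra hc
    rw [Finset.not_nonempty_iff_eq_empty] at hc
    simp [supSupp, hc] at h
  obtain ⟨b, hb, hsup⟩ := Finset.exists_mem_eq_sup (supp z) hne id
  obtain ⟨j, hj, hjb⟩ := mem_supp_iff.1 hb
  have : supSupp z = (j : ℕ) + 1 := by rw [supSupp, hsup, ← hjb]; rfl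
  rw [this, ent_apply]; exact hj

lemma ent_infSupp_pos {z : Fin d → ℕ} (h : infSupp z ≤ d) : 0 < ent z (infSupp z) := by
  by_cases hne : (supp z).Nonempty
  · have hm := Finset.min'_mem (supp z) hne
    obtain ⟨j, hj, hjk⟩ := mem_supp_iff.1 hm
    have he : infSupp z = (j : ℕ) + 1 := by rw [infSupp, dif_pos hne, ← hjk]
    rw [he, ent_apply]; exact hj
  · exfalso; rw [infSupp, dif_neg hne] at h; omega

lemma ent_eq_sum (z : Fin d → ℕ) (i : ℕ) :
    ent z i = ∑ j : Fin d, if (j : ℕ) + 1 = i then z j else 0 := by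
  by_cases h : 1 ≤ i ∧ i ≤ d
  · have hlt : i - 1 < d := by omega
    have : ∀ j : Fin d, ((j : ℕ) + 1 = i) ↔ (j = ⟨i - 1, hlt⟩) := by
      intro j
      constructor
      · intro hj; exact Fin.ext (by simp; omega)
      · intro hj; subst hj; simp; omega
    rw [Finset.sum_congr rfl (fun j _ => by rw [if_congr (this j) rfl rfl])]
    rw [Finset.sum_ite_eq' Finset.univ _ z]
    simp [ent, dif_pos h]
  · rw [ent, dif_neg h]
    rw [Finset.sum_eq_zero]
    intro j _
    rw [if_neg]
    have := j.2
    omega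

lemma SX_zero (W : E d) : SX W 0 = 0 := by
  rw [SX, Finset.sum_eq_zero]; intro j _; rw [if_neg]; omega

lemma SX_succ (W : E d) (k : ℕ) : SX W (k + 1) = SX W k + ent W.2 (k + 1) := by
  rw [SX, SX, ent_eq_sum, ← Finset.sum_add_distrib]
  apply Finset.sum_congr rfl
  intro j _
  split_ifs <;> omega

lemma BX_eq (W : E d) (k : ℕ) : BX W k = BX W (k + 1) + ent W.1 k := by
  rw [BX, BX, ent_eq_sum, ← Finset.sum_add_distrib]
  apply Finset.sum_congr rfl
  intro j _
  split_ifs <;> omega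

lemma BX_top (W : E d) {k : ℕ} (h : d + 1 ≤ k) : BX W k = 0 := by
  rw [BX, Finset.sum_eq_zero]; intro j _; rw [if_neg]; have := j.2; omega

lemma SX_mono (W : E d) {k l : ℕ} (h : k ≤ l) : SX W k ≤ SX W l := by
  apply Finset.sum_le_sum
  intro j _
  split_ifs <;> omega

lemma BX_anti (W : E d) {k l : ℕ} (h : k ≤ l) : BX W l ≤ BX W k := by
  apply Finset.sum_le_sum
  intro j _
  split_ifs <;> omega

lemma ent_le_SX (W : E d) {i k : ℕ} (h : i ≤ k) : ent W.2 i ≤ SX W k := by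
  by_cases hi : 1 ≤ i ∧ i ≤ d
  · rw [ent_eq_sum]
    apply Finset.sum_le_sum
    intro j _
    split_ifs <;> omega
  · rw [ent, dif_neg hi]; exact Nat.zero_le _

lemma ent_le_BX (W : E d) {i k : ℕ} (h : k ≤ i) : ent W.1 i ≤ BX W k := by
  by_cases hi : 1 ≤ i ∧ i ≤ d
  · rw [ent_eq_sum]
    apply Finset.sum_le_sum
    intro j _
    split_ifs <;> omega
  · rw [ent, dif_neg hi]; exact Nat.zero_le _

lemma SX_le_total (W : E d) (k : ℕ) : SX W k ≤ ∑ j, W.2 j := by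
  apply Finset.sum_le_sum; intro j _; split_ifs <;> omega

lemma BX_le_total (W : E d) (k : ℕ) : BX W k ≤ ∑ j, W.1 j := by
  apply Finset.sum_le_sum; intro j _; split_ifs <;> omega

lemma SX_eq_total (W : E d) {k : ℕ} (h : ∀ j, 0 < W.2 j → (j : ℕ) + 1 ≤ k) :
    SX W k = ∑ j, W.2 j := by
  apply Finset.sum_congr rfl
  intro j _
  split_ifs with hc
  · rfl
  · rcases Nat.eq_zero_or_pos (W.2 j) with h0 | h0
    · omega
    · exact absurd (h j h0) hc

lemma BX_eq_total (W : E d) {k : ℕ} (h : ∀ j, 0 < W.1 j → k ≤ (j : ℕ) + 1) :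
    BX W k = ∑ j, W.1 j := by
  apply Finset.sum_congr rfl
  intro j _
  split_ifs with hc
  · rfl
  · rcases Nat.eq_zero_or_pos (W.1 j) with h0 | h0
    · omega
    · exact absurd (h j h0) hc

lemma SX_eq_zero (W : E d) {k : ℕ} (h : ∀ j, 0 < W.2 j → k < (j : ℕ) + 1) :
    SX W k = 0 := by
  rw [SX, Finset.sum_eq_zero]
  intro j _
  split_ifs with hc
  · rcases Nat.eq_zero_or_pos (W.2 j) with h0 | h0
    · omega
    · have := h j h0; omega
  · rfl

lemma BX_eq_zero (W : E d) {k : ℕ} (h : ∀ j, 0 < W.1 j → (j : ℕ) + 1 < k) :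
    BX W k = 0 := by
  rw [BX, Finset.sum_eq_zero]
  intro j _
  split_ifs with hc
  · rcases Nat.eq_zero_or_pos (W.1 j) with h0 | h0
    · omega
    · have := h j h0; omega
  · rfl

lemma SX_add (X Z : E d) (k : ℕ) : SX (X + Z) k = SX X k + SX Z k := by
  rw [SX, SX, SX, ← Finset.sum_add_distrib]
  apply Finset.sum_congr rfl
  intro j _
  have : (X + Z).2 j = X.2 j + Z.2 j := rfl
  rw [this]
  split_ifs <;> omega

lemma BX_add (X Z : E d) (k : ℕ) : BX (X + Z) k = BX X k + BX Z k := by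
  rw [BX, BX, BX, ← Finset.sum_add_distrib]
  apply Finset.sum_congr rfl
  intro j _
  have : (X + Z).1 j = X.1 j + Z.1 j := rfl
  rw [this]
  split_ifs <;> omega

lemma gX_step (W : E d) (k : ℕ) :
    gX W (k + 1) = gX W k + ent W.2 (k + 1) + ent W.1 k := by
  rw [gX, gX, SX_succ, BX_eq W k]
  push_cast
  ring

lemma gX_mono (W : E d) {k l : ℕ} (h : k ≤ l) : gX W k ≤ gX W l := by
  rw [gX, gX]
  have h1 := SX_mono W h
  have h2 := BX_anti W h
  omega

lemma gX_zero (W : E d) : gX W 0 ≤ 0 := by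
  rw [gX, SX_zero]
  simp

lemma pB_le_d (Y : E d) : pB Y ≤ d := by
  apply Finset.sup_le
  intro k hk
  have := (Finset.mem_filter.1 hk).1
  rw [Finset.mem_Icc] at this
  exact this.2

lemma gX_pB_neg (Y : E d) (h : 1 ≤ pB Y) : gX Y (pB Y) < 0 := by
  set s := (Finset.Icc 1 d).filter fun k => gX Y k < 0 with hs
  have hne : s.Nonempty := by
    by_contra hc
    rw [Finset.not_nonempty_iff_eq_empty] at hc
    rw [pB, ← hs, hc] at h
    simp at h
  obtain ⟨b, hb, hsup⟩ := Finset.exists_mem_eq_sup s hne id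
  have : pB Y = b := hsup
  rw [this]
  exact (Finset.mem_filter.1 hb).2

lemma gX_nonneg_of_pB_lt (Y : E d) {k : ℕ} (h : pB Y < k) : 0 ≤ gX Y k := by
  by_contra hc
  push_neg at hc
  rcases le_or_gt k d with hkd | hkd
  · have h1 : 1 ≤ k := by omega
    have hmem : k ∈ (Finset.Icc 1 d).filter fun k => gX Y k < 0 :=
      Finset.mem_filter.2 ⟨Finset.mem_Icc.2 ⟨h1, hkd⟩, hc⟩
    have hle : k ≤ pB Y := Finset.le_sup (f := id) hmem
    omega
  · have : BX Y k = 0 := BX_top Y (by omega)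
    rw [gX, this] at hc
    omega

lemma pB_eq (Y : E d) {p : ℕ} (hpd : p ≤ d) (hneg : 1 ≤ p → gX Y p < 0)
    (hnn : ∀ k, p < k → 0 ≤ gX Y k) : pB Y = p := by
  apply le_antisymm
  · apply Finset.sup_le
    intro k hk
    simp only [id_eq]
    have h2 := (Finset.mem_filter.1 hk).2
    by_contra hc
    have := hnn k (by omega)
    omega
  · rcases Nat.eq_zero_or_pos p with h0 | h0
    · omega
    · exact Finset.le_sup (f := id)
        (Finset.mem_filter.2 ⟨Finset.mem_Icc.2 ⟨h0, hpd⟩, hneg h0⟩)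

lemma pA_ge_one (Y : E d) : 1 ≤ pA Y := by
  rw [pA]
  split
  · rename_i hne
    have := Finset.min'_mem _ hne
    have := (Finset.mem_Icc.1 (Finset.mem_filter.1 this).1).1
    omega
  · omega

lemma pA_le_d1 (Y : E d) : pA Y ≤ d + 1 := by
  rw [pA]
  split
  · rename_i hne
    have := Finset.min'_mem _ hne
    have := (Finset.mem_Icc.1 (Finset.mem_filter.1 this).1).2
    omega
  · omega

lemma gX_pA_pos (Y : E d) (h : pA Y ≤ d) : 0 < gX Y (pA Y) := by
  by_cases hne : ((Finset.Icc 1 d).filter fun k => 0 < gX Y k).Nonempty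
  · have hm := Finset.min'_mem _ hne
    have he : pA Y = ((Finset.Icc 1 d).filter fun k => 0 < gX Y k).min' hne := by
      rw [pA, dif_pos hne]
    rw [he]
    exact (Finset.mem_filter.1 hm).2
  · exfalso
    rw [pA, dif_neg hne] at h
    omega

lemma gX_nonpos_of_lt_pA (Y : E d) {k : ℕ} (h : k < pA Y) : gX Y k ≤ 0 := by
  by_contra hc
  push_neg at hc
  rcases Nat.eq_zero_or_pos k with h0 | h0
  · subst h0; have := gX_zero Y; omega
  · have hkd : k ≤ d := by have := pA_le_d1 Y; omega
    have hmem : k ∈ (Finset.Icc 1 d).filter fun k => 0 < gX Y k :=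
      Finset.mem_filter.2 ⟨Finset.mem_Icc.2 ⟨h0, hkd⟩, hc⟩
    have hne : ((Finset.Icc 1 d).filter fun k => 0 < gX Y k).Nonempty := ⟨k, hmem⟩
    have := Finset.min'_le _ k hmem
    rw [pA, dif_pos hne] at h
    omega

lemma pA_eq (Y : E d) {q : ℕ} (hq1 : 1 ≤ q) (hqd : q ≤ d + 1) (hpos : q ≤ d → 0 < gX Y q)
    (hnp : ∀ k, k < q → gX Y k ≤ 0) : pA Y = q := by
  rcases le_or_gt q d with hq | hq
  · have hmem : q ∈ (Finset.Icc 1 d).filter fun k => 0 < gX Y k :=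
      Finset.mem_filter.2 ⟨Finset.mem_Icc.2 ⟨hq1, hq⟩, hpos hq⟩
    have hne : ((Finset.Icc 1 d).filter fun k => 0 < gX Y k).Nonempty := ⟨q, hmem⟩
    rw [pA, dif_pos hne]
    apply le_antisymm
    · exact Finset.min'_le _ q hmem
    · have := Finset.min'_mem _ hne
      have h2 := (Finset.mem_filter.1 this).2
      by_contra hc
      push_neg at hc
      have := hnp _ hc
      omega
  · have hq' : q = d + 1 := by omega
    have hemp : ¬ ((Finset.Icc 1 d).filter fun k => 0 < gX Y k).Nonempty := by
      rintro ⟨k, hk⟩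
      have h1 := Finset.mem_Icc.1 (Finset.mem_filter.1 hk).1
      have h2 := (Finset.mem_filter.1 hk).2
      have := hnp k (by omega)
      omega
    rw [pA, dif_neg hemp, hq']

lemma pB_lt_pA (Y : E d) : pB Y < pA Y := by
  by_contra hc
  push_neg at hc
  have h1 : 1 ≤ pB Y := le_trans (pA_ge_one Y) hc
  have h2 := gX_pB_neg Y h1
  have h3 := gX_pA_pos Y (le_trans hc (pB_le_d Y))
  have h4 := gX_mono Y hc
  omega

lemma ent_add (x z : Fin d → ℕ) (i : ℕ) : ent (x + z) i = ent x i + ent z i := by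
  unfold ent
  split <;> simp

lemma pos_ent {z : Fin d → ℕ} {i : ℕ} (h : 0 < ent z i) :
    ∃ j : Fin d, (j : ℕ) + 1 = i ∧ 0 < z j := by
  unfold ent at h
  split at h
  · rename_i hi
    exact ⟨⟨i - 1, by omega⟩, by simp; omega, h⟩
  · omega

lemma pB_pos_of_not {Y : E d} (h : ¬ (gX Y (pB Y) ≤ -(ent Y.1 (pB Y) : ℤ))) :
    1 ≤ pB Y := by
  by_contra hc
  have h0 : pB Y = 0 := by omega
  rw [h0, ent_zero] at h
  have := gX_zero Y
  push_neg at h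
  simp at h
  omega

lemma clearPlus_if {Y : E d} (h : gX Y (pB Y) ≤ -(ent Y.1 (pB Y) : ℤ)) (j : Fin d) :
    clearPlus Y j = if (j : ℕ) + 1 ≤ pB Y then Y.1 j else 0 := by
  rw [clearPlus, if_pos h]
  show (if ((j : ℕ) + 1 : ℤ) ≤ (pB Y : ℤ) then Y.1 j else 0) = _
  by_cases hj : (j : ℕ) + 1 ≤ pB Y
  · rw [if_pos (by exact_mod_cast hj), if_pos hj]
  · rw [if_neg (by exact_mod_cast hj), if_neg hj]

lemma clearPlus_else {Y : E d} (h : ¬ (gX Y (pB Y) ≤ -(ent Y.1 (pB Y) : ℤ))) (j : Fin d) :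
    clearPlus Y j = (if (j : ℕ) + 1 + 1 ≤ pB Y then Y.1 j else 0)
      + (if (j : ℕ) + 1 = pB Y then (-(gX Y (pB Y))).toNat else 0) := by
  have hg : gX Y (pB Y) < 0 := gX_pB_neg Y (pB_pos_of_not h)
  rw [clearPlus, if_neg h]
  show tauLow ((pB Y : ℤ) - 1) Y.1 j + (max 0 (-(gX Y (pB Y)))).toNat * e (pB Y) j = _
  rw [max_eq_right (by omega : (0:ℤ) ≤ -(gX Y (pB Y)))]
  unfold tauLow e
  congr 1
  · by_cases hj : (j : ℕ) + 1 + 1 ≤ pB Y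
    · rw [if_pos (by push_cast; omega), if_pos hj]
    · rw [if_neg (by push_cast; omega), if_neg hj]
  · by_cases hj : (j : ℕ) + 1 = pB Y
    · rw [if_pos hj, if_pos hj, mul_one]
    · rw [if_neg hj, if_neg hj, mul_zero]

lemma pA_le_d_of_not {Y : E d} (h : ¬ ((ent Y.2 (pA Y) : ℤ) ≤ gX Y (pA Y))) :
    pA Y ≤ d := by
  by_contra hc
  have h0 : pA Y = d + 1 := by have := pA_le_d1 Y; omega
  rw [h0, ent_of_gt _ (by omega)] at h
  rw [gX, BX_top Y (le_refl _)] at h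
  push_neg at h
  simp at h
  omega

lemma clearMinus_if {Y : E d} (h : (ent Y.2 (pA Y) : ℤ) ≤ gX Y (pA Y)) (j : Fin d) :
    clearMinus Y j = if pA Y ≤ (j : ℕ) + 1 then Y.2 j else 0 := by
  rw [clearMinus, if_pos h]
  show (if (pA Y : ℤ) ≤ ((j : ℕ) + 1 : ℤ) then Y.2 j else 0) = _
  by_cases hj : pA Y ≤ (j : ℕ) + 1
  · rw [if_pos (by exact_mod_cast hj), if_pos hj]
  · rw [if_neg (by exact_mod_cast hj), if_neg hj]

lemma clearMinus_else {Y : E d} (h : ¬ ((ent Y.2 (pA Y) : ℤ) ≤ gX Y (pA Y))) (j : Fin d) :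
    clearMinus Y j = (if pA Y + 1 ≤ (j : ℕ) + 1 then Y.2 j else 0)
      + (if (j : ℕ) + 1 = pA Y then (gX Y (pA Y)).toNat else 0) := by
  have hg : 0 < gX Y (pA Y) := gX_pA_pos Y (pA_le_d_of_not h)
  rw [clearMinus, if_neg h]
  show tauHigh ((pA Y : ℤ) + 1) Y.2 j + (max 0 (gX Y (pA Y))).toNat * e (pA Y) j = _
  rw [max_eq_right (by omega : (0:ℤ) ≤ gX Y (pA Y))]
  unfold tauHigh e
  congr 1
  · by_cases hj : pA Y + 1 ≤ (j : ℕ) + 1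
    · rw [if_pos (by push_cast; omega), if_pos hj]
    · rw [if_neg (by push_cast; omega), if_neg hj]
  · by_cases hj : (j : ℕ) + 1 = pA Y
    · rw [if_pos hj, if_pos hj, mul_one]
    · rw [if_neg hj, if_neg hj, mul_zero]

lemma clearPlus_le (Y : E d) (j : Fin d) : clearPlus Y j ≤ Y.1 j := by
  by_cases h : gX Y (pB Y) ≤ -(ent Y.1 (pB Y) : ℤ)
  · rw [clearPlus_if h]; split_ifs <;> omega
  · rw [clearPlus_else h]
    have hg : gX Y (pB Y) < 0 := gX_pB_neg Y (pB_pos_of_not h)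
    by_cases hj : (j : ℕ) + 1 = pB Y
    · have he : ent Y.1 (pB Y) = Y.1 j := by rw [← hj, ent_apply]
      rw [if_neg (by omega), if_pos hj]
      push_neg at h
      omega
    · rw [if_neg hj]
      split_ifs <;> omega

lemma clearMinus_le (Y : E d) (j : Fin d) : clearMinus Y j ≤ Y.2 j := by
  by_cases h : (ent Y.2 (pA Y) : ℤ) ≤ gX Y (pA Y)
  · rw [clearMinus_if h]; split_ifs <;> omega
  · rw [clearMinus_else h]
    have hg : 0 < gX Y (pA Y) := gX_pA_pos Y (pA_le_d_of_not h)
    by_cases hj : (j : ℕ) + 1 = pA Y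
    · have he : ent Y.2 (pA Y) = Y.2 j := by rw [← hj, ent_apply]
      rw [if_neg (by omega), if_pos hj]
      push_neg at h
      omega
    · rw [if_neg hj]
      split_ifs <;> omega

lemma clearPlus_supp (Y : E d) (j : Fin d) (h : 0 < clearPlus Y j) : (j : ℕ) + 1 ≤ pB Y := by
  by_cases hb : gX Y (pB Y) ≤ -(ent Y.1 (pB Y) : ℤ)
  · rw [clearPlus_if hb] at h; split_ifs at h <;> omega
  · rw [clearPlus_else hb] at h
    by_cases hj : (j : ℕ) + 1 = pB Y
    · omega
    · rw [if_neg hj] at h; split_ifs at h <;> omega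

lemma clearMinus_supp (Y : E d) (j : Fin d) (h : 0 < clearMinus Y j) : pA Y ≤ (j : ℕ) + 1 := by
  by_cases hb : (ent Y.2 (pA Y) : ℤ) ≤ gX Y (pA Y)
  · rw [clearMinus_if hb] at h; split_ifs at h <;> omega
  · rw [clearMinus_else hb] at h
    by_cases hj : (j : ℕ) + 1 = pA Y
    · omega
    · rw [if_neg hj] at h; split_ifs at h <;> omega

lemma Zplus_supp (Y : E d) (j : Fin d) (h : clearPlus Y j < Y.1 j) : pB Y ≤ (j : ℕ) + 1 := by
  by_cases hb : gX Y (pB Y) ≤ -(ent Y.1 (pB Y) : ℤ)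
  · rw [clearPlus_if hb] at h; split_ifs at h <;> omega
  · rw [clearPlus_else hb] at h
    by_cases hj : (j : ℕ) + 1 = pB Y
    · omega
    · rw [if_neg hj] at h; split_ifs at h <;> omega

lemma Zminus_supp (Y : E d) (j : Fin d) (h : clearMinus Y j < Y.2 j) : (j : ℕ) + 1 ≤ pA Y := by
  by_cases hb : (ent Y.2 (pA Y) : ℤ) ≤ gX Y (pA Y)
  · rw [clearMinus_if hb] at h; split_ifs at h <;> omega
  · rw [clearMinus_else hb] at h
    by_cases hj : (j : ℕ) + 1 = pA Y
    · omega
    · rw [if_neg hj] at h; split_ifs at h <;> omega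

lemma gX_mid (Y : E d) {k : ℕ} (h1 : pB Y < k) (h2 : k < pA Y) : gX Y k = 0 :=
  le_antisymm (gX_nonpos_of_lt_pA Y h2) (gX_nonneg_of_pB_lt Y h1)

lemma van_plus (Y : E d) {k : ℕ} (h1 : pB Y < k) (h2 : k + 1 < pA Y) : ent Y.1 k = 0 := by
  have hs := gX_step Y k
  rw [gX_mid Y h1 (by omega), gX_mid Y (by omega : pB Y < k + 1) h2] at hs
  omega

lemma van_minus (Y : E d) {k : ℕ} (h1 : pB Y < k) (h2 : k + 1 < pA Y) :
    ent Y.2 (k + 1) = 0 := by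
  have hs := gX_step Y k
  rw [gX_mid Y h1 (by omega), gX_mid Y (by omega : pB Y < k + 1) h2] at hs
  omega

lemma SX_const (Y : E d) {k : ℕ} (h1 : pB Y + 1 ≤ k) (h2 : k ≤ pA Y - 1) :
    SX Y k = SX Y (pB Y + 1) := by
  induction k, h1 using Nat.le_induction with
  | base => rfl
  | succ k hk ih =>
    have hq1 := pA_ge_one Y
    rw [SX_succ, van_minus Y (by omega) (by omega), ih (by omega), add_zero]

lemma BX_const (Y : E d) {k : ℕ} (h1 : pB Y + 1 ≤ k) (h2 : k ≤ pA Y - 1) :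
    BX Y k = BX Y (pB Y + 1) := by
  induction k, h1 using Nat.le_induction with
  | base => rfl
  | succ k hk ih =>
    have hq1 := pA_ge_one Y
    have hb := BX_eq Y k
    rw [van_plus Y (by omega) (by omega), add_zero] at hb
    rw [← hb]
    exact ih (by omega)

lemma SB_eq (Y : E d) (h : pB Y + 2 ≤ pA Y) :
    SX Y (pB Y + 1) = BX Y (pB Y + 1) ∧ SX Y (pA Y - 1) = SX Y (pB Y + 1) ∧
      BX Y (pA Y - 1) = BX Y (pB Y + 1) := by
  refine ⟨?_, SX_const Y (by omega) (by omega), BX_const Y (by omega) (by omega)⟩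
  have := gX_mid Y (by omega : pB Y < pB Y + 1) (by omega : pB Y + 1 < pA Y)
  rw [gX] at this
  omega

lemma plus_if_of_sep (Y : E d) (h : pB Y + 2 ≤ pA Y) :
    gX Y (pB Y) ≤ -(ent Y.1 (pB Y) : ℤ) := by
  obtain ⟨h1, _, _⟩ := SB_eq Y h
  have hb := BX_eq Y (pB Y)
  have hs' : SX Y (pB Y) ≤ SX Y (pB Y + 1) := SX_mono Y (Nat.le_succ _)
  rw [gX]
  omega

lemma minus_if_of_sep (Y : E d) (h : pB Y + 2 ≤ pA Y) :
    (ent Y.2 (pA Y) : ℤ) ≤ gX Y (pA Y) := by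
  obtain ⟨h1, h2, h3⟩ := SB_eq Y h
  obtain ⟨q', hq'⟩ : ∃ q', pA Y = q' + 1 := ⟨pA Y - 1, by have := pA_ge_one Y; omega⟩
  have hs : SX Y (pA Y) = SX Y (pA Y - 1) + ent Y.2 (pA Y) := by
    rw [hq', Nat.add_sub_cancel, SX_succ]
  have hb : BX Y (pA Y) ≤ BX Y (pA Y - 1) := BX_anti Y (by omega)
  rw [gX]
  omega

lemma sum_Zplus_if (Y : E d) (h : gX Y (pB Y) ≤ -(ent Y.1 (pB Y) : ℤ)) :
    ∑ j, (Y.1 j - clearPlus Y j) = BX Y (pB Y + 1) := by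
  rw [BX]
  apply Finset.sum_congr rfl
  intro j _
  rw [clearPlus_if h]
  split_ifs <;> omega

lemma sum_Zplus_else (Y : E d) (h : ¬ (gX Y (pB Y) ≤ -(ent Y.1 (pB Y) : ℤ))) :
    ((∑ j, (Y.1 j - clearPlus Y j) : ℕ) : ℤ) = SX Y (pB Y) := by
  have hp1 : 1 ≤ pB Y := pB_pos_of_not h
  have hpd : pB Y ≤ d := pB_le_d Y
  have hg : gX Y (pB Y) < 0 := gX_pB_neg Y hp1
  have key : ∀ j : Fin d, (Y.1 j - clearPlus Y j)
      + (if (j : ℕ) + 1 = pB Y then (-(gX Y (pB Y))).toNat else 0)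
      = (if pB Y ≤ (j : ℕ) + 1 then Y.1 j else 0) := by
    intro j
    rw [clearPlus_else h j]
    by_cases hj : (j : ℕ) + 1 = pB Y
    · have he : ent Y.1 (pB Y) = Y.1 j := by rw [← hj, ent_apply]
      push_neg at h
      rw [if_pos hj, if_neg (by omega), if_pos (by omega)]
      omega
    · rw [if_neg hj, add_zero, add_zero]
      split_ifs <;> omega
  have hsum := Finset.sum_congr rfl (fun j (_ : j ∈ Finset.univ) => key j)
  rw [Finset.sum_add_distrib] at hsum
  have h2 : (∑ j : Fin d, if (j : ℕ) + 1 = pB Y then (-(gX Y (pB Y))).toNat else 0)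
      = (-(gX Y (pB Y))).toNat := by
    rw [← ent_eq_sum (fun _ => (-(gX Y (pB Y))).toNat) (pB Y)]
    unfold ent
    rw [dif_pos ⟨hp1, hpd⟩]
  have h3 : (∑ j : Fin d, if pB Y ≤ (j : ℕ) + 1 then Y.1 j else 0) = BX Y (pB Y) := rfl
  rw [h2, h3] at hsum
  have hgx : gX Y (pB Y) = (SX Y (pB Y) : ℤ) - BX Y (pB Y) := rfl
  omega

lemma sum_Zminus_if (Y : E d) (h : (ent Y.2 (pA Y) : ℤ) ≤ gX Y (pA Y)) :
    ∑ j, (Y.2 j - clearMinus Y j) = SX Y (pA Y - 1) := by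
  have hq1 := pA_ge_one Y
  rw [SX]
  apply Finset.sum_congr rfl
  intro j _
  rw [clearMinus_if h]
  split_ifs <;> omega

lemma sum_Zminus_else (Y : E d) (h : ¬ ((ent Y.2 (pA Y) : ℤ) ≤ gX Y (pA Y))) :
    ((∑ j, (Y.2 j - clearMinus Y j) : ℕ) : ℤ) = BX Y (pA Y) := by
  have hqd : pA Y ≤ d := pA_le_d_of_not h
  have hq1 : 1 ≤ pA Y := pA_ge_one Y
  have hg : 0 < gX Y (pA Y) := gX_pA_pos Y hqd
  have key : ∀ j : Fin d, (Y.2 j - clearMinus Y j)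
      + (if (j : ℕ) + 1 = pA Y then (gX Y (pA Y)).toNat else 0)
      = (if (j : ℕ) + 1 ≤ pA Y then Y.2 j else 0) := by
    intro j
    rw [clearMinus_else h j]
    by_cases hj : (j : ℕ) + 1 = pA Y
    · have he : ent Y.2 (pA Y) = Y.2 j := by rw [← hj, ent_apply]
      push_neg at h
      rw [if_pos hj, if_neg (by omega), if_pos (by omega)]
      omega
    · rw [if_neg hj, add_zero, add_zero]
      split_ifs <;> omega
  have hsum := Finset.sum_congr rfl (fun j (_ : j ∈ Finset.univ) => key j)
  rw [Finset.sum_add_distrib] at hsum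
  have h2 : (∑ j : Fin d, if (j : ℕ) + 1 = pA Y then (gX Y (pA Y)).toNat else 0)
      = (gX Y (pA Y)).toNat := by
    rw [← ent_eq_sum (fun _ => (gX Y (pA Y)).toNat) (pA Y)]
    unfold ent
    rw [dif_pos ⟨hq1, hqd⟩]
  have h3 : (∑ j : Fin d, if (j : ℕ) + 1 ≤ pA Y then Y.2 j else 0) = SX Y (pA Y) := rfl
  rw [h2, h3] at hsum
  have hgx : gX Y (pA Y) = (SX Y (pA Y) : ℤ) - BX Y (pA Y) := rfl
  omega

lemma sum_Z_eq (Y : E d) :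
    ∑ j, (Y.1 j - clearPlus Y j) = ∑ j, (Y.2 j - clearMinus Y j) := by
  have hlt := pB_lt_pA Y
  rcases le_or_gt (pB Y + 2) (pA Y) with hsep | hsep
  · obtain ⟨h1, h2, h3⟩ := SB_eq Y hsep
    rw [sum_Zplus_if Y (plus_if_of_sep Y hsep), sum_Zminus_if Y (minus_if_of_sep Y hsep)]
    omega
  · have hq : pA Y = pB Y + 1 := by omega
    have hBp := BX_eq Y (pB Y)
    have hSq : SX Y (pA Y) = SX Y (pA Y - 1) + ent Y.2 (pA Y) := by
      rw [hq, Nat.add_sub_cancel, SX_succ]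
    have hq1 : pA Y - 1 = pB Y := by omega
    rw [hq1] at hSq
    have hgB : gX Y (pB Y) = (SX Y (pB Y) : ℤ) - BX Y (pB Y) := rfl
    have hgA : gX Y (pA Y) = (SX Y (pA Y) : ℤ) - BX Y (pA Y) := rfl
    have hBq : BX Y (pA Y) = BX Y (pB Y + 1) := by rw [hq]
    by_cases hbp : gX Y (pB Y) ≤ -(ent Y.1 (pB Y) : ℤ) <;>
      by_cases hbm : (ent Y.2 (pA Y) : ℤ) ≤ gX Y (pA Y)
    · rw [sum_Zplus_if Y hbp, sum_Zminus_if Y hbm, hq1]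
      omega
    · have e1 := sum_Zplus_if Y hbp
      have e2 := sum_Zminus_else Y hbm
      push_neg at hbm
      omega
    · have e1 := sum_Zplus_else Y hbp
      have e2 := sum_Zminus_if Y hbm
      push_neg at hbp
      rw [hq1] at e2
      omega
    · have e1 := sum_Zplus_else Y hbp
      have e2 := sum_Zminus_else Y hbm
      push_neg at hbp hbm
      omega

lemma clear_spec (Y : E d) : clear Y ∈ Lset d ∧ Y ∈ Gamma (clear Y) := by
  have hlt := pB_lt_pA Y
  have hpd := pB_le_d Y
  have hqd1 := pA_le_d1 Y
  have hq1 := pA_ge_one Y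
  have hbid : bid (clear Y) ≤ pB Y := supSupp_le_iff.2 (clearPlus_supp Y)
  have hask : pA Y ≤ ask (clear Y) := le_infSupp hqd1 (clearMinus_supp Y)
  set Z : E d := (fun j => Y.1 j - clearPlus Y j, fun j => Y.2 j - clearMinus Y j) with hZ
  have hZ1 : ∀ j, Z.1 j = Y.1 j - clearPlus Y j := fun j => rfl
  have hZ2 : ∀ j, Z.2 j = Y.2 j - clearMinus Y j := fun j => rfl
  have hZp : ∀ j : Fin d, 0 < Z.1 j → pB Y ≤ (j : ℕ) + 1 := by
    intro j hj
    rw [hZ1] at hj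
    exact Zplus_supp Y j (by omega)
  have hZm : ∀ j : Fin d, 0 < Z.2 j → (j : ℕ) + 1 ≤ pA Y := by
    intro j hj
    rw [hZ2] at hj
    exact Zminus_supp Y j (by omega)
  have hmain : supSupp Z.2 ≤ infSupp Z.1 := by
    by_cases hbp : gX Y (pB Y) ≤ -(ent Y.1 (pB Y) : ℤ) <;>
      by_cases hbm : (ent Y.2 (pA Y) : ℤ) ≤ gX Y (pA Y)
    · -- both if
      have hinf : pB Y + 1 ≤ infSupp Z.1 := by
        apply le_infSupp (by omega)
        intro j hj
        rw [hZ1] at hj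
        have h2 := clearPlus_if hbp j
        by_contra hc
        rw [if_pos (by omega)] at h2
        omega
      refine le_trans (supSupp_le_iff.2 ?_) hinf
      intro j hj
      rw [hZ2] at hj
      have h2 := clearMinus_if hbm j
      by_contra hc
      push_neg at hc
      have hjq : (j : ℕ) + 1 < pA Y := by
        by_contra hc2
        rw [if_pos (by omega)] at h2
        omega
      have := van_minus Y (k := (j : ℕ)) (by omega) (by omega)
      rw [ent_apply] at this
      omega
    · -- plus if, minus else
      have hqp : pA Y = pB Y + 1 := by
        by_contra hc
        exact hbm (minus_if_of_sep Y (by omega))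
      have hinf : pB Y + 1 ≤ infSupp Z.1 := by
        apply le_infSupp (by omega)
        intro j hj
        rw [hZ1] at hj
        have h2 := clearPlus_if hbp j
        by_contra hc
        rw [if_pos (by omega)] at h2
        omega
      refine le_trans (supSupp_le_iff.2 ?_) hinf
      intro j hj
      have := hZm j hj
      omega
    · -- plus else, minus if
      have hqp : pA Y = pB Y + 1 := by
        by_contra hc
        exact hbp (plus_if_of_sep Y (by omega))
      have hinf : pB Y ≤ infSupp Z.1 := le_infSupp (by omega) hZp
      refine le_trans (supSupp_le_iff.2 ?_) hinf
      intro j hj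
      rw [hZ2] at hj
      have h2 := clearMinus_if hbm j
      by_contra hc
      rw [if_pos (by omega)] at h2
      omega
    · -- both else: contradiction
      exfalso
      have hqp : pA Y = pB Y + 1 := by
        by_contra hc
        exact hbp (plus_if_of_sep Y (by omega))
      have hBp := BX_eq Y (pB Y)
      have hSq : SX Y (pA Y) = SX Y (pA Y - 1) + ent Y.2 (pA Y) := by
        rw [hqp, Nat.add_sub_cancel, SX_succ]
      have hq1' : pA Y - 1 = pB Y := by omega
      rw [hq1'] at hSq
      have hgB : gX Y (pB Y) = (SX Y (pB Y) : ℤ) - BX Y (pB Y) := rfl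
      have hgA : gX Y (pA Y) = (SX Y (pA Y) : ℤ) - BX Y (pA Y) := rfl
      have hBq : BX Y (pA Y) = BX Y (pB Y + 1) := by rw [hqp]
      push_neg at hbp hbm
      omega
  have hYeq : Y = clear Y + Z := by
    have h1 : ∀ j, Y.1 j = clearPlus Y j + Z.1 j := by
      intro j
      have := clearPlus_le Y j
      rw [hZ1]
      omega
    have h2 : ∀ j, Y.2 j = clearMinus Y j + Z.2 j := by
      intro j
      have := clearMinus_le Y j
      rw [hZ2]
      omega
    exact Prod.ext (funext h1) (funext h2)
  refine ⟨lt_of_le_of_lt hbid (lt_of_lt_of_le hlt hask), Z, hYeq, sum_Z_eq Y, hmain, ?_, ?_⟩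
  · exact le_trans (supSupp_le_iff.2 hZm) hask
  · exact le_trans hbid (le_infSupp (by omega) hZp)

lemma clear_of_add (X Z : E d) (hX : X ∈ Lset d)
    (hsum : (∑ j, Z.1 j) = ∑ j, Z.2 j)
    (h1 : supSupp Z.2 ≤ infSupp Z.1)
    (h2 : supSupp Z.2 ≤ ask X)
    (h3 : bid X ≤ infSupp Z.1) :
    clear (X + Z) = X := by
  set Y : E d := X + Z with hYdef
  have hbid_rfl : bid X = supSupp X.1 := rfl
  have hask_rfl : ask X = infSupp X.2 := rfl
  have hba : bid X < ask X := hX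
  have hb_d : bid X ≤ d := supSupp_le_d _
  have hα_d : supSupp Z.2 ≤ d := supSupp_le_d _
  have ha_d1 : ask X ≤ d + 1 := infSupp_le_d1 _
  have hβ_d1 : infSupp Z.1 ≤ d + 1 := infSupp_le_d1 _
  have ha1 : 1 ≤ ask X := by omega
  have sX1 : ∀ j : Fin d, 0 < X.1 j → (j : ℕ) + 1 ≤ bid X := fun j h => le_supSupp h
  have sX2 : ∀ j : Fin d, 0 < X.2 j → ask X ≤ (j : ℕ) + 1 := fun j h => infSupp_le h
  have sZ1 : ∀ j : Fin d, 0 < Z.1 j → infSupp Z.1 ≤ (j : ℕ) + 1 := fun j h => infSupp_le h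
  have sZ2 : ∀ j : Fin d, 0 < Z.2 j → (j : ℕ) + 1 ≤ supSupp Z.2 := fun j h => le_supSupp h
  have hSY : ∀ k, SX Y k = SX X k + SX Z k := SX_add X Z
  have hBY : ∀ k, BX Y k = BX X k + BX Z k := BX_add X Z
  have tSZ : ∀ k, supSupp Z.2 ≤ k → SX Z k = ∑ j, Z.2 j :=
    fun k hk => SX_eq_total Z (fun j hj => le_trans (sZ2 j hj) hk)
  have tBZ : ∀ k, k ≤ infSupp Z.1 → BX Z k = ∑ j, Z.1 j :=
    fun k hk => BX_eq_total Z (fun j hj => le_trans hk (sZ1 j hj))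
  have tSX0 : ∀ k, k < ask X → SX X k = 0 :=
    fun k hk => SX_eq_zero X (fun j hj => lt_of_lt_of_le hk (sX2 j hj))
  have tBX0 : ∀ k, bid X < k → BX X k = 0 :=
    fun k hk => BX_eq_zero X (fun j hj => lt_of_le_of_lt (sX1 j hj) hk)
  have tSZle : ∀ k, SX Z k ≤ ∑ j, Z.2 j := SX_le_total Z
  have tBZle : ∀ k, BX Z k ≤ ∑ j, Z.1 j := BX_le_total Z
  have tBXb : BX X (bid X) = ent X.1 (bid X) := by
    have hb1 := BX_eq X (bid X)
    have hb0 := tBX0 (bid X + 1) (by omega)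
    omega
  have tSXa : SX X (ask X) = ent X.2 (ask X) := by
    obtain ⟨a', ha'⟩ : ∃ a', ask X = a' + 1 := ⟨ask X - 1, by omega⟩
    have hs1 := SX_succ X a'
    have hs0 := tSX0 a' (by omega)
    rw [ha']
    omega
  obtain ⟨p, hp1, hp2, hp3⟩ :
      ∃ p, bid X ≤ p ∧ supSupp Z.2 - 1 ≤ p ∧ (p = bid X ∨ p = supSupp Z.2 - 1) :=
    ⟨max (bid X) (supSupp Z.2 - 1), le_max_left _ _, le_max_right _ _, max_choice _ _⟩
  obtain ⟨q, hq1, hq2, hq3⟩ :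
      ∃ q, q ≤ ask X ∧ q ≤ infSupp Z.1 + 1 ∧ (q = ask X ∨ q = infSupp Z.1 + 1) :=
    ⟨min (ask X) (infSupp Z.1 + 1), min_le_left _ _, min_le_right _ _, min_choice _ _⟩
  have hpa : p < ask X := by omega
  have hpβ : p ≤ infSupp Z.1 := by omega
  have hgp : gX Y p = (SX Z p : ℤ) - (∑ j, Z.1 j) - BX X p := by
    rw [gX, hSY, hBY, tSX0 p hpa, tBZ p hpβ]
    push_cast
    ring
  have hqα : supSupp Z.2 ≤ q := by omega
  have hqb : bid X < q := by omega
  have hgq : gX Y q = (SX X q : ℤ) + (∑ j, Z.2 j) - BX Z q := by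
    rw [gX, hSY, hBY, tSZ q hqα, tBX0 q hqb]
    push_cast
    ring
  have hP : pB Y = p := by
    apply pB_eq Y (by omega)
    · intro hpone
      rcases hp3 with hpb | hpα
      · have hent : ent X.1 (bid X) ≤ BX X (bid X) := ent_le_BX X (le_refl _)
        have hbp : 0 < ent X.1 (bid X) := ent_supSupp_pos (by omega)
        have hsz := tSZle p
        have hBXp : BX X p = BX X (bid X) := by rw [hpb]
        rw [hgp, hBXp]
        omega
      · obtain ⟨α', hα'⟩ : ∃ α', supSupp Z.2 = α' + 1 := ⟨supSupp Z.2 - 1, by omega⟩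
        have hsz : SX Z p + ent Z.2 (supSupp Z.2) ≤ ∑ j, Z.2 j := by
          have hm1 := SX_succ Z α'
          have hm2 := tSZ (supSupp Z.2) (le_refl _)
          have hm3 := SX_mono Z (show p ≤ α' by omega)
          rw [hα'] at hm2
          rw [hα']
          omega
        have hap : 0 < ent Z.2 (supSupp Z.2) := ent_supSupp_pos (by omega)
        have hBge : (0:ℤ) ≤ BX X p := by positivity
        rw [hgp]
        omega
    · intro k hk
      have hB0 := tBX0 k (by omega)
      have hSk := tSZ k (by omega)
      have hBk := tBZle k
      rw [gX, hSY, hBY, hB0, hSk]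
      omega
  have hQ : pA Y = q := by
    apply pA_eq Y (by omega) (by omega)
    · intro hqd
      rcases hq3 with hqa | hqβ
      · have hent : ent X.2 (ask X) ≤ SX X (ask X) := ent_le_SX X (le_refl _)
        have hap : 0 < ent X.2 (ask X) := ent_infSupp_pos (by omega)
        have hbz := tBZle q
        have hSXq : SX X q = SX X (ask X) := by rw [hqa]
        rw [hgq, hSXq]
        omega
      · have hbz : BX Z q + ent Z.1 (infSupp Z.1) ≤ ∑ j, Z.1 j := by
          have hm1 := BX_eq Z (infSupp Z.1)
          have hm2 := tBZ (infSupp Z.1) (le_refl _)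
          have hm3 := BX_anti Z (show infSupp Z.1 + 1 ≤ q by omega)
          omega
        have hbp : 0 < ent Z.1 (infSupp Z.1) := ent_infSupp_pos (by omega)
        have hSge : (0:ℤ) ≤ SX X q := by positivity
        rw [hgq]
        omega
    · intro k hk
      have hS0 := tSX0 k (by omega)
      have hBk := tBZ k (by omega)
      have hSk := tSZle k
      rw [gX, hSY, hBY, hS0, hBk]
      omega
  have hEnt1 : ∀ i, ent Y.1 i = ent X.1 i + ent Z.1 i := fun i => ent_add X.1 Z.1 i
  have hEnt2 : ∀ i, ent Y.2 i = ent X.2 i + ent Z.2 i := fun i => ent_add X.2 Z.2 i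
  have hplus : clearPlus Y = X.1 := by
    by_cases hz : ent Z.1 p = 0
    · have hcond : gX Y (pB Y) ≤ -(ent Y.1 (pB Y) : ℤ) := by
        rw [hP, hEnt1, hz, add_zero]
        have hent : ent X.1 p ≤ BX X p := ent_le_BX X (le_refl p)
        have hsz := tSZle p
        rw [hgp]
        omega
      funext j
      rw [clearPlus_if hcond, hP]
      split_ifs with hj
      · have hZ0 : Z.1 j = 0 := by
          by_contra hc
          have hβj := sZ1 j (by omega)
          have hjp : (j : ℕ) + 1 = p := by omega
          have : ent Z.1 p = Z.1 j := by rw [← hjp, ent_apply]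
          omega
        show X.1 j + Z.1 j = X.1 j
        omega
      · by_contra hc
        have := sX1 j (by omega)
        omega
    · have hz' : 0 < ent Z.1 p := Nat.pos_of_ne_zero hz
      obtain ⟨j0, hj0, hj0pos⟩ := pos_ent hz'
      have hβp : infSupp Z.1 ≤ p := by have := sZ1 j0 hj0pos; omega
      have hpβeq : p = infSupp Z.1 := le_antisymm hpβ hβp
      have hpb : p = bid X := by omega
      have hSZp : SX Z p = ∑ j, Z.2 j := tSZ p (by omega)
      have hBXp : BX X p = ent X.1 (bid X) := by rw [hpb]; exact tBXb
      have hgpv : gX Y p = -(ent X.1 (bid X) : ℤ) := by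
        rw [hgp, hSZp, ← hsum, hBXp]
        ring
      have hcond : ¬ (gX Y (pB Y) ≤ -(ent Y.1 (pB Y) : ℤ)) := by
        rw [hP, hEnt1, hgpv]
        push_neg
        have hee : ent X.1 p = ent X.1 (bid X) := by rw [hpb]
        omega
      funext j
      rw [clearPlus_else hcond j, hP]
      by_cases hj : (j : ℕ) + 1 = p
      · rw [if_pos hj, if_neg (by omega), hgpv]
        have : ent X.1 (bid X) = X.1 j := by rw [← hpb, ← hj, ent_apply]
        omega
      · rw [if_neg hj, add_zero]
        split_ifs with hj2
        · have hZ0 : Z.1 j = 0 := by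
            by_contra hc
            have := sZ1 j (by omega)
            omega
          show X.1 j + Z.1 j = X.1 j
          omega
        · by_contra hc
          have := sX1 j (by omega)
          omega
  have hminus : clearMinus Y = X.2 := by
    by_cases hz : ent Z.2 q = 0
    · have hcond : (ent Y.2 (pA Y) : ℤ) ≤ gX Y (pA Y) := by
        rw [hQ, hEnt2, hz, add_zero]
        have hent : ent X.2 q ≤ SX X q := ent_le_SX X (le_refl q)
        have hbz := tBZle q
        rw [hgq]
        omega
      funext j
      rw [clearMinus_if hcond, hQ]
      split_ifs with hj
      · have hZ0 : Z.2 j = 0 := by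
          by_contra hc
          have hαj := sZ2 j (by omega)
          have hjq : (j : ℕ) + 1 = q := by omega
          have : ent Z.2 q = Z.2 j := by rw [← hjq, ent_apply]
          omega
        show X.2 j + Z.2 j = X.2 j
        omega
      · by_contra hc
        have := sX2 j (by omega)
        omega
    · have hz' : 0 < ent Z.2 q := Nat.pos_of_ne_zero hz
      obtain ⟨j0, hj0, hj0pos⟩ := pos_ent hz'
      have hqα2 : q ≤ supSupp Z.2 := by have := sZ2 j0 hj0pos; omega
      have hqαeq : q = supSupp Z.2 := le_antisymm hqα2 hqα
      have hqa : q = ask X := by omega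
      have hBZq : BX Z q = ∑ j, Z.1 j := tBZ q (by omega)
      have hSXq : SX X q = ent X.2 (ask X) := by rw [hqa]; exact tSXa
      have hgqv : gX Y q = (ent X.2 (ask X) : ℤ) := by
        rw [hgq, hBZq, hsum, hSXq]
        ring
      have hcond : ¬ ((ent Y.2 (pA Y) : ℤ) ≤ gX Y (pA Y)) := by
        rw [hQ, hEnt2, hgqv]
        push_neg
        have hee : ent X.2 q = ent X.2 (ask X) := by rw [hqa]
        omega
      funext j
      rw [clearMinus_else hcond j, hQ]
      by_cases hj : (j : ℕ) + 1 = q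
      · rw [if_pos hj, if_neg (by omega), hgqv]
        have : ent X.2 (ask X) = X.2 j := by rw [← hqa, ← hj, ent_apply]
        omega
      · rw [if_neg hj, add_zero]
        split_ifs with hj2
        · have hZ0 : Z.2 j = 0 := by
            by_contra hc
            have := sZ2 j (by omega)
            omega
          show X.2 j + Z.2 j = X.2 j
          omega
        · by_contra hc
          have := sX2 j (by omega)
          omega
  exact Prod.ext hplus hminus

lemma clear_of_mem_Gamma {X Y : E d} (hX : X ∈ Lset d) (hY : Y ∈ Gamma X) :
    clear Y = X := by
  obtain ⟨Z, rfl, hs, h1, h2, h3⟩ := hY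
  exact clear_of_add X Z hX hs h1 h2 h3

end Helpers

/-- Lemma C.1 of Cont–Degond–Xuan: the family `{Γ(X)}_{X ∈ L}` is a
partition of `E`. -/
theorem Gamma_partition (d : ℕ) (hd : 1 ≤ d) :
    (∀ X ∈ Lset d, ∀ X' ∈ Lset d, X ≠ X' → Gamma X ∩ Gamma X' = ∅) ∧
    (∀ Y : E d, Y ∈ Gamma (clear Y)) ∧
    (⋃ X ∈ Lset d, Gamma X) = Set.univ := by
  refine ⟨?_, fun Y => (clear_spec Y).2, ?_⟩
  · intro X hX X' hX' hne
    rw [Set.eq_empty_iff_forall_notMem]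
    rintro Y ⟨hY1, hY2⟩
    exact hne ((clear_of_mem_Gamma hX hY1).symm.trans (clear_of_mem_Gamma hX' hY2))
  · apply Set.eq_univ_of_forall
    intro Y
    simp only [Set.mem_iUnion, exists_prop]
    exact ⟨clear Y, (clear_spec Y).1, (clear_spec Y).2⟩

end OB
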